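/- arXiv:1312.4524 — 2 statements merged into one kernel-verified Lean document; each statement's English description precedes it below -/
import Mathlib

section
/- The solution graph of a Horn formula φ without positive unit clauses is disconnected if and only if φ has a locally minimal nonzero solution. -/
/-!
Solutions of a Horn formula are closed under coordinatewise meet, and without positive unit
clauses the zero vector is a solution as soon as there is any. In a meet-closed solution set a
locally minimal solution `a` lies below every solution reachable from it: at the first edge
`v — w` leaving the upper set of `a`, the meet `a ⊓ w` would be a strictly smaller neighbour of
`a`. Hence a nonzero locally minimal solution is not connected to zero. Conversely, a minimal
element of a component that does not contain zero is a nonzero locally minimal solution.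
-/

def SatClause {n : ℕ} (a : Fin n → Bool) (c : List (Fin n × Bool)) : Prop :=
  ∃ l ∈ c, (if l.2 then a l.1 else !(a l.1)) = true

def IsHornClause {n : ℕ} (c : List (Fin n × Bool)) : Prop :=
  (c.filter (fun l => l.2)).length ≤ 1

def Reach {ι : Type*} [Fintype ι] (S : Set (ι → Bool)) : (ι → Bool) → (ι → Bool) → Prop :=
  Relation.ReflTransGen (fun u v => u ∈ S ∧ v ∈ S ∧ hammingDist u v = 1)

def Connected {ι : Type*} [Fintype ι] (S : Set (ι → Bool)) : Prop :=
  ∀ a ∈ S, ∀ b ∈ S, Reach S a b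

lemma hammingDist_eq_one_iff {ι : Type*} {β : ι → Type*} [Fintype ι] [∀ i, DecidableEq (β i)]
    {x y : ∀ i, β i} :
    hammingDist x y = 1 ↔ ∃ i, x i ≠ y i ∧ ∀ j ≠ i, x j = y j := by
  simp only [hammingDist, Finset.card_eq_one, Finset.eq_singleton_iff_unique_mem,
    Finset.mem_filter, Finset.mem_univ, true_and]
  exact exists_congr fun i => and_congr_right fun _ => forall_congr' fun j => not_imp_comm

namespace Reach

variable {ι : Type*} [Fintype ι] {S : Set (ι → Bool)} {a b : ι → Bool}

lemma symm (h : Reach S a b) : Reach S b a :=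
  (@Relation.ReflTransGen.stdSymm _ _
    ⟨fun _ _ ⟨hu, hv, huv⟩ => ⟨hv, hu, by rwa [hammingDist_comm]⟩⟩).symm _ _ h

lemma mem (ha : a ∈ S) (h : Reach S a b) : b ∈ S := by
  induction h with
  | refl => exact ha
  | tail _ hstep _ => exact hstep.2.1

end Reach

section SolutionGraph

variable {ι : Type*} [Fintype ι] {S : Set (ι → Bool)}

lemma connected_of_forall_reach {z : ι → Bool} (hz : ∀ x ∈ S, Reach S z x) : Connected S :=
  fun a ha b hb => (hz a ha).symm.trans (hz b hb)

def IsLocallyMinimal (S : Set (ι → Bool)) (a : ι → Bool) : Prop :=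
  ∀ b ∈ S, hammingDist a b = 1 → ¬ b ≤ a

lemma exists_reach_isLocallyMinimal {x : ι → Bool} (hx : x ∈ S) :
    ∃ m, Reach S x m ∧ IsLocallyMinimal S m := by
  obtain ⟨m, hxm, hmin⟩ := exists_minimal_of_wellFoundedLT (Reach S x) ⟨x, .refl⟩
  refine ⟨m, hxm, fun b hb hmb hbm => ?_⟩
  have hmb_eq : m = b := le_antisymm (hmin (hxm.tail ⟨hxm.mem hx, hb, hmb⟩) hbm) hbm
  simp [hmb_eq, hammingDist_self] at hmb

lemma IsLocallyMinimal.le_of_reach (hS : ∀ a ∈ S, ∀ b ∈ S, a ⊓ b ∈ S) {a b : ι → Bool}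
    (ha : a ∈ S) (hmin : IsLocallyMinimal S a) (h : Reach S a b) : a ≤ b := by
  induction h with
  | refl => exact le_rfl
  | @tail v w _ hvw hav =>
    obtain ⟨-, hw, hd⟩ := hvw
    obtain ⟨i, -, hvw⟩ := hammingDist_eq_one_iff.mp hd
    intro j
    by_cases hji : j = i
    swap
    · exact hvw j hji ▸ hav j
    subst hji
    by_contra haw
    obtain ⟨haj, hwj⟩ : a j = true ∧ w j = false := by
      revert haw; cases a j <;> cases w j <;> simp
    refine hmin (a ⊓ w) (hS a ha w hw) (hammingDist_eq_one_iff.mpr ⟨j, ?_, fun k hk => ?_⟩)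
      inf_le_left
    · simp [haj, hwj]
    · exact (inf_eq_left.mpr (hvw k hk ▸ hav k)).symm

end SolutionGraph

lemma List.eq_of_mem_of_length_le_one {α : Type*} {l : List α} (h : l.length ≤ 1) {x y : α}
    (hx : x ∈ l) (hy : y ∈ l) : x = y := by
  rcases l with _ | ⟨z, _ | ⟨_, _⟩⟩ <;> simp_all

section Horn

variable {n : ℕ} {c : List (Fin n × Bool)}

lemma IsHornClause.eq_of_mem {l l' : Fin n × Bool} (hc : IsHornClause c) (hl : l ∈ c)
    (hl' : l' ∈ c) (hpos : l.2 = true) (hpos' : l'.2 = true) : l = l' :=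
  List.eq_of_mem_of_length_le_one hc (List.mem_filter.mpr ⟨hl, hpos⟩)
    (List.mem_filter.mpr ⟨hl', hpos'⟩)

lemma IsHornClause.exists_neg (hc : IsHornClause c) (hne : c ≠ [])
    (hpu : ∀ i, c ≠ [(i, true)]) : ∃ l ∈ c, l.2 = false := by
  by_contra! hpos
  simp only [ne_eq, Bool.not_eq_false] at hpos
  obtain ⟨l, rfl⟩ : ∃ l, c = [l] := by
    have hlen : c.length ≤ 1 := by
      rwa [IsHornClause, List.filter_eq_self.mpr fun l hl => hpos l hl] at hc
    rcases c with _ | ⟨l, _ | ⟨_, _⟩⟩ <;> simp_all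
  exact hpu l.1 (by rw [← hpos l (List.mem_singleton_self l)])

lemma SatClause.inf {a b : Fin n → Bool} (hc : IsHornClause c) (ha : SatClause a c)
    (hb : SatClause b c) : SatClause (a ⊓ b) c := by
  obtain ⟨⟨i, s⟩, hi, hai⟩ := ha
  obtain ⟨⟨j, t⟩, hj, hbj⟩ := hb
  cases s
  · exact ⟨(i, false), hi, by simp_all⟩
  cases t
  · exact ⟨(j, false), hj, by simp_all⟩
  obtain rfl : i = j := congrArg Prod.fst (hc.eq_of_mem hi hj rfl rfl)
  exact ⟨(i, true), hi, by simp_all⟩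

lemma SatClause.bot {a : Fin n → Bool} (hc : IsHornClause c) (hpu : ∀ i, c ≠ [(i, true)])
    (ha : SatClause a c) : SatClause ⊥ c := by
  obtain ⟨_, hl₀, -⟩ := ha
  obtain ⟨l, hl, hneg⟩ := hc.exists_neg (List.ne_nil_of_mem hl₀) hpu
  exact ⟨l, hl, by simp [hneg]⟩

end Horn

theorem horn_disconnected_iff_locally_minimal_nonzero (n : ℕ)
    (φ : List (List (Fin n × Bool)))
    (hHorn : ∀ c ∈ φ, IsHornClause c)
    (hNoPosUnit : ∀ c ∈ φ, ∀ i : Fin n, c ≠ [(i, true)]) :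
    let S : Set (Fin n → Bool) := {a | ∀ c ∈ φ, SatClause a c}
    (¬ Connected S ↔
      ∃ a ∈ S, a ≠ (fun _ => false) ∧
        ∀ b ∈ S, hammingDist a b = 1 → ¬ b ≤ a) := by
  intro S
  show ¬ Connected S ↔ ∃ a ∈ S, a ≠ ⊥ ∧ IsLocallyMinimal S a
  have hinf : ∀ a ∈ S, ∀ b ∈ S, a ⊓ b ∈ S :=
    fun _ ha _ hb c hc => (ha c hc).inf (hHorn c hc) (hb c hc)
  have hbot : ∀ a ∈ S, ⊥ ∈ S :=
    fun _ ha c hc => (ha c hc).bot (hHorn c hc) (hNoPosUnit c hc)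
  constructor
  · intro hS
    obtain ⟨x, hx, hx0⟩ : ∃ x ∈ S, ¬ Reach S ⊥ x := by
      by_contra! h
      exact hS (connected_of_forall_reach h)
    obtain ⟨m, hxm, hm⟩ := exists_reach_isLocallyMinimal hx
    refine ⟨m, hxm.mem hx, ?_, hm⟩
    rintro rfl
    exact hx0 hxm.symm
  · rintro ⟨a, ha, ha0, hmin⟩ hS
    exact ha0 (le_bot_iff.mp (hmin.le_of_reach hinf ha (hS a ha ⊥ (hbot a ha))))
end

section
/- Let φ be a 2-CNF formula (conjunction of clauses with at most two literals each). If a and b are two satisfying assignments lying in the same connected component of the solution graph G(φ), then the shortest-path distance between a and b in G(φ) equals their Hamming distance; that is, no distance expands. -/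
/-- `Steps S k a b`: there is a walk of length `k` from `a` to `b` inside `S`,
each step changing exactly one coordinate. -/
inductive Steps {n : ℕ} (S : Set (Fin n → Bool)) : ℕ → (Fin n → Bool) → (Fin n → Bool) → Prop
  | refl (a : Fin n → Bool) (h : a ∈ S) : Steps S 0 a a
  | tail {k : ℕ} {a b c : Fin n → Bool} :
      Steps S k a b → c ∈ S → hammingDist b c = 1 → Steps S (k + 1) a c

/-!
Solution sets of 2-CNF formulas are closed under the coordinatewise majority `median a b x`.
For solutions `a`, `b` the retraction `x ↦ median a b x` fixes `a` and `b`, preserves solutions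
and does not increase Hamming distances, so it maps walks to walks of the same length whose
steps may be trivial. Induct on the length of such a lazy walk from `a` to `b`: if its first step
flips a coordinate on which `a` and `b` differ, it brings us one closer to `b`; otherwise it goes
to a point `w` with `median a b w = a`, and retracting the rest of the walk gives a shorter lazy
walk from `a` to `b`.
-/

section Hamming

variable {ι : Type*} [Fintype ι]

theorem exists_ne_and_forall_ne_eq_of_hammingDist_eq_one {β : ι → Type*}
    [∀ i, DecidableEq (β i)] {x y : ∀ i, β i} (h : hammingDist x y = 1) :
    ∃ i, x i ≠ y i ∧ ∀ j ≠ i, x j = y j := by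
  obtain ⟨i, hi⟩ := Finset.card_eq_one.mp h
  have hmem : ∀ j, x j ≠ y j ↔ j = i := fun j => by
    simpa using Finset.ext_iff.mp hi j
  exact ⟨i, (hmem i).mpr rfl, fun j hj => not_not.mp ((hmem j).not.mpr hj)⟩

theorem hammingDist_add_one_of_flip {a w b : ι → Bool} {i : ι} (hflip : a i ≠ w i)
    (hrest : ∀ j ≠ i, a j = w j) (hib : a i ≠ b i) :
    hammingDist w b + 1 = hammingDist a b := by
  have hlt : hammingDist w b < hammingDist a b := by
    refine Finset.card_lt_card (Finset.ssubset_iff_of_subset ?_ |>.mpr ⟨i, ?_, ?_⟩)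
    · intro j hj
      by_cases hji : j = i
      · simpa [hji] using hib
      · simpa [hrest j hji] using hj
    · simpa using hib
    · rw [Finset.mem_filter_univ, not_not]
      revert hflip hib
      cases a i <;> cases w i <;> cases b i <;> simp
  have hle : hammingDist a b ≤ hammingDist a w + hammingDist w b := hammingDist_triangle a w b
  have hw : hammingDist a w ≤ 1 := by
    refine (Finset.card_le_card (t := {i}) fun j hj => ?_).trans (Finset.card_singleton i).le
    rw [Finset.mem_filter_univ] at hj
    exact Finset.mem_singleton.mpr (by_contra fun hji => hj (hrest j hji))
  omega

end Hamming

section Median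

variable {ι : Type*}

/-- The coordinatewise majority of three Boolean vectors. -/
def median (a b x : ι → Bool) : ι → Bool := fun i => if a i = b i then a i else x i

theorem median_apply_of_two {a b x : ι → Bool} {i : ι} {v : Bool}
    (h : a i = v ∧ b i = v ∨ a i = v ∧ x i = v ∨ b i = v ∧ x i = v) :
    median a b x i = v := by
  unfold median
  revert h
  cases a i <;> cases b i <;> cases x i <;> simp

theorem median_self_right (a b : ι → Bool) : median a b b = b := by
  ext i
  exact median_apply_of_two (Or.inr (Or.inr ⟨rfl, rfl⟩))

theorem median_eq_left {a b x : ι → Bool} (h : ∀ i, a i ≠ b i → x i = a i) :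
    median a b x = a := by
  ext i
  by_cases hi : a i = b i
  · simp [median, hi]
  · simp [median, hi, h i hi]

theorem hammingDist_median_le [Fintype ι] (a b x y : ι → Bool) :
    hammingDist (median a b x) (median a b y) ≤ hammingDist x y := by
  refine Finset.card_le_card fun i => ?_
  rw [Finset.mem_filter_univ, Finset.mem_filter_univ]
  exact mt fun hxy => by simp only [median, hxy]

def MedianClosed (S : Set (ι → Bool)) : Prop :=
  ∀ a ∈ S, ∀ b ∈ S, ∀ x ∈ S, median a b x ∈ S

end Median

section TwoCNF

variable {n : ℕ}

theorem satClause_iff {a : Fin n → Bool} {c : List (Fin n × Bool)} :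
    SatClause a c ↔ ∃ l ∈ c, a l.1 = l.2 := by
  refine exists_congr fun l => and_congr_right fun _ => ?_
  cases l.2 <;> simp

theorem List.eq_or_eq_or_eq_of_length_le_two {α : Type*} {c : List α} (hc : c.length ≤ 2)
    {p q r : α} (hp : p ∈ c) (hq : q ∈ c) (hr : r ∈ c) : p = q ∨ p = r ∨ q = r := by
  rcases c with _ | ⟨u, _ | ⟨v, _ | ⟨w, c⟩⟩⟩
  · simp at hp
  · simp_all
  · simp only [List.mem_cons, List.not_mem_nil, or_false] at hp hq hr
    rcases hp with rfl | rfl <;> rcases hq with rfl | rfl <;> rcases hr with rfl | rfl <;> simp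
  · simp at hc

/-- By pigeonhole two of `a`, `b`, `x` satisfy the same literal, and then so does their
majority. -/
theorem satClause_median {a b x : Fin n → Bool} {c : List (Fin n × Bool)} (hc : c.length ≤ 2)
    (ha : SatClause a c) (hb : SatClause b c) (hx : SatClause x c) :
    SatClause (median a b x) c := by
  rw [satClause_iff] at *
  obtain ⟨la, hla, ha⟩ := ha
  obtain ⟨lb, hlb, hb⟩ := hb
  obtain ⟨lx, hlx, hx⟩ := hx
  rcases List.eq_or_eq_or_eq_of_length_le_two hc hla hlb hlx with rfl | rfl | rfl
  · exact ⟨la, hla, median_apply_of_two (.inl ⟨ha, hb⟩)⟩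
  · exact ⟨la, hla, median_apply_of_two (.inr (.inl ⟨ha, hx⟩))⟩
  · exact ⟨lb, hlb, median_apply_of_two (.inr (.inr ⟨hb, hx⟩))⟩

theorem medianClosed_of_length_le_two {φ : List (List (Fin n × Bool))}
    (hφ : ∀ c ∈ φ, c.length ≤ 2) : MedianClosed {x | ∀ c ∈ φ, SatClause x c} :=
  fun _ ha _ hb _ hx c hc => satClause_median (hφ c hc) (ha c hc) (hb c hc) (hx c hc)

end TwoCNF

section Walks

variable {n : ℕ} {S : Set (Fin n → Bool)}

theorem Steps.hammingDist_le {k : ℕ} {a b : Fin n → Bool} (h : Steps S k a b) :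
    hammingDist a b ≤ k := by
  induction h with
  | refl a _ => simp
  | @tail k a b c _ _ hbc ih =>
    calc hammingDist a c ≤ hammingDist a b + hammingDist b c := hammingDist_triangle a b c
      _ ≤ k + 1 := by omega

theorem Steps.cons {k : ℕ} {a b c : Fin n → Bool} (ha : a ∈ S) (hab : hammingDist a b = 1)
    (h : Steps S k b c) : Steps S (k + 1) a c := by
  induction h with
  | refl b hb => exact .tail (.refl a ha) hb hab
  | tail _ hc hd ih => exact .tail (ih hab) hc hd

inductive LazySteps (S : Set (Fin n → Bool)) : ℕ → (Fin n → Bool) → (Fin n → Bool) → Prop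
  | refl (a : Fin n → Bool) (h : a ∈ S) : LazySteps S 0 a a
  | cons {k : ℕ} {a b c : Fin n → Bool} :
      a ∈ S → hammingDist a b ≤ 1 → LazySteps S k b c → LazySteps S (k + 1) a c

theorem LazySteps.mem_right {k : ℕ} {a b : Fin n → Bool} (h : LazySteps S k a b) : b ∈ S := by
  induction h with
  | refl _ h => exact h
  | cons _ _ _ ih => exact ih

theorem LazySteps.tail {k : ℕ} {a b c : Fin n → Bool} (h : LazySteps S k a b) (hc : c ∈ S)
    (hbc : hammingDist b c ≤ 1) : LazySteps S (k + 1) a c := by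
  induction h with
  | refl a ha => exact .cons ha hbc (.refl c hc)
  | cons ha hab _ ih => exact .cons ha hab (ih hbc)

theorem Steps.lazySteps {k : ℕ} {a b : Fin n → Bool} (h : Steps S k a b) : LazySteps S k a b := by
  induction h with
  | refl a ha => exact .refl a ha
  | tail _ hc hd ih => exact ih.tail hc hd.le

theorem LazySteps.map_median {a b : Fin n → Bool} (hS : MedianClosed S) (ha : a ∈ S) (hb : b ∈ S)
    {k : ℕ} {x y : Fin n → Bool} (h : LazySteps S k x y) :
    LazySteps S k (median a b x) (median a b y) := by
  induction h with
  | refl x hx => exact .refl _ (hS a ha b hb x hx)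
  | cons hx hxy _ ih => exact .cons (hS a ha b hb _ hx) ((hammingDist_median_le a b _ _).trans hxy) ih

theorem LazySteps.steps_hammingDist (hS : MedianClosed S) {k : ℕ} {a b : Fin n → Bool}
    (h : LazySteps S k a b) : Steps S (hammingDist a b) a b := by
  induction k generalizing a b with
  | zero =>
    cases h with
    | refl a ha => simpa using Steps.refl a ha
  | succ k ih =>
    obtain _ | ⟨ha, haw, hw⟩ := h
    rcases Nat.le_one_iff_eq_zero_or_eq_one.mp haw with haw | haw
    · rw [hammingDist_eq_zero.mp haw]
      exact ih hw
    obtain ⟨i, hflip, hrest⟩ := exists_ne_and_forall_ne_eq_of_hammingDist_eq_one haw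
    by_cases hib : a i = b i
    · have hmed := hw.map_median hS ha hw.mem_right
      rw [median_self_right, median_eq_left fun j hj => (hrest j fun hji => hj (hji ▸ hib)).symm]
        at hmed
      exact ih hmed
    · rw [← hammingDist_add_one_of_flip hflip hrest hib]
      exact (ih hw).cons ha haw

end Walks

theorem two_cnf_distances_do_not_expand (n : ℕ)
    (φ : List (List (Fin n × Bool)))
    (h2CNF : ∀ c ∈ φ, c.length ≤ 2)
    (a b : Fin n → Bool) :
    let S : Set (Fin n → Bool) := {x | ∀ c ∈ φ, SatClause x c}
    a ∈ S → b ∈ S → (∃ k, Steps S k a b) →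
      IsLeast {k | Steps S k a b} (hammingDist a b) := by
  intro S _ _ ⟨k, hk⟩
  exact ⟨hk.lazySteps.steps_hammingDist (medianClosed_of_length_le_two h2CNF),
    fun _ hm => Steps.hammingDist_le hm⟩
end
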